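/- For any CABA framework F_c, the set GroundCArg of all ground constrained arguments of F_c (that is, GrCInst(CArg)) equals GrCInst(MGCArg), the set of all ground constrained instances of the most general constrained arguments. -/

import Mathlib

namespace CABAFormal

/-- First-order terms over function symbols `F`; variables are natural numbers. -/
inductive Term (F : Type) : Type
  | var : ℕ → Term F
  | app : F → List (Term F) → Term F

namespace Term

variable {F D : Type}

mutual
  /-- Variables occurring in a term. -/
  def varsT : Term F → Set ℕ
    | .var n => {n}
    | .app _ args => varsL args
  /-- Variables occurring in a list of terms. -/
  def varsL : List (Term F) → Set ℕ
    | [] => ∅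
    | t :: ts => varsT t ∪ varsL ts
end

mutual
  /-- Application of a substitution to a term. -/
  def substT (σ : ℕ → Term F) : Term F → Term F
    | .var n => σ n
    | .app f args => .app f (substL σ args)
  def substL (σ : ℕ → Term F) : List (Term F) → List (Term F)
    | [] => []
    | t :: ts => substT σ t :: substL σ ts
end

mutual
  /-- Evaluation of a term in a structure with domain `D`. -/
  def evalT (funI : F → List D → D) (σ : ℕ → D) : Term F → D
    | .var n => σ n
    | .app f args => funI f (evalL funI σ args)
  def evalL (funI : F → List D → D) (σ : ℕ → D) : List (Term F) → List D
    | [] => []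
    | t :: ts => evalT funI σ t :: evalL funI σ ts
end

end Term

/-- Atomic formulas: a predicate symbol applied to a list of terms. -/
structure Atom (F P : Type) : Type where
  pred : P
  args : List (Term F)

namespace Atom
variable {F P : Type}
def vars (a : Atom F P) : Set ℕ := Term.varsL a.args
def subst (σ : ℕ → Term F) (a : Atom F P) : Atom F P := ⟨a.pred, Term.substL σ a.args⟩
def Ground (a : Atom F P) : Prop := a.vars = ∅
end Atom

/-- An inference rule with an atomic head and a list of atomic body sentences. -/
structure Rule (F P : Type) : Type where
  head : Atom F P
  body : List (Atom F P)

namespace Rule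
variable {F P : Type}
def subst (σ : ℕ → Term F) (r : Rule F P) : Rule F P := ⟨r.head.subst σ, r.body.map (Atom.subst σ)⟩
def vars (r : Rule F P) : Set ℕ := r.head.vars ∪ ⋃ b ∈ r.body, Atom.vars b
end Rule

def setVars {F P : Type} (S : Set (Atom F P)) : Set ℕ := ⋃ a ∈ S, a.vars

def substSet {F P : Type} (σ : ℕ → Term F) (S : Set (Atom F P)) : Set (Atom F P) :=
  Atom.subst σ '' S

/-- A variable renaming: a substitution given by a (finite-support) permutation of variables. -/
def IsRenaming {F : Type} (ρ : ℕ → Term F) : Prop :=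
  ∃ π : Equiv.Perm ℕ, {n | π n ≠ n}.Finite ∧ ρ = fun n => Term.var (π n)

/-- The substitution `{X/t}` sending the variables `xs` to the terms `ts` (componentwise). -/
def mkSubst {F : Type} (xs : List ℕ) (ts : List (Term F)) : ℕ → Term F :=
  fun n => ((xs.zip ts).lookup n).getD (Term.var n)

/-- Two assignments agree on a set of variables. -/
def Agree {D : Type} (σ σ' : ℕ → D) (V : Set ℕ) : Prop := ∀ x ∈ V, σ x = σ' x

/-- A set of atoms is predicate closed if together with `p(t)` it contains `p(t')`
for every tuple `t'` of terms of the same length. -/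
def PredClosed {F P : Type} (L : Set (Atom F P)) : Prop :=
  ∀ (p : P) (ts ts' : List (Term F)), Atom.mk p ts ∈ L → ts'.length = ts.length →
    Atom.mk p ts' ∈ L

/-- A (flat) Constrained Assumption-Based Argumentation framework, together with the
semantics of its theory of constraints (an algebraic structure with domain `D`,
in which a designated predicate `eqP` is interpreted as identity, as required by
the Clark Equality Theory). -/
structure CABA (F P D : Type) : Type where
  /-- the atomic language `L_c` -/
  Lc : Set (Atom F P)
  /-- the atomic constraints `𝒞 ⊆ L_c` -/
  Con : Set (Atom F P)
  /-- the inference rules `ℛ` -/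
  Rules : Set (Rule F P)
  /-- the assumptions `𝒜` -/
  Asm : Set (Atom F P)
  /-- the contrary predicate map: the contrary of `p(t)` is `contrPred p (t)` -/
  contrPred : P → P
  /-- interpretation of function symbols in the structure underlying `CT` -/
  funI : F → List D → D
  /-- interpretation of predicate symbols in the structure underlying `CT` -/
  predI : P → List D → Prop
  /-- the equality predicate of `CT` -/
  eqP : P
  dom_nonempty : Nonempty D
  ground_term : ∃ t : Term F, Term.varsT t = ∅
  con_sub : Con ⊆ Lc
  lc_closed : PredClosed Lc
  con_closed : PredClosed Con
  asm_closed : PredClosed Asm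
  rules_lang : ∀ r ∈ Rules, (r.head ∈ Lc ∧ r.head ∉ Con) ∧ ∀ b ∈ r.body, b ∈ Lc
  /-- rules are in normalised form: heads are predicates applied to distinct variables -/
  rules_norm : ∀ r ∈ Rules, ∃ xs : List ℕ, xs.Nodup ∧ r.head.args = xs.map Term.var
  asm_sub : ∀ a ∈ Asm, a ∈ Lc ∧ a ∉ Con
  asm_nonempty : Asm.Nonempty
  contr_wf : ∀ a ∈ Asm, Atom.mk (contrPred a.pred) a.args ∈ Lc ∧
    Atom.mk (contrPred a.pred) a.args ∉ Con
  /-- flatness: assumptions are not heads of rules -/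
  flat : ∀ r ∈ Rules, r.head ∉ Asm
  eq_con : ∀ t u : Term F, Atom.mk eqP [t, u] ∈ Con
  eq_interp : ∀ a b : D, predI eqP [a, b] ↔ a = b

namespace CABA

variable {F P D : Type}

/-- The contrary of an assumption. -/
def contrary (fc : CABA F P D) (a : Atom F P) : Atom F P := ⟨fc.contrPred a.pred, a.args⟩

/-- Truth of an atom under a variable assignment, in the structure underlying `CT`. -/
def Holds (fc : CABA F P D) (σ : ℕ → D) (a : Atom F P) : Prop :=
  fc.predI a.pred (Term.evalL fc.funI σ a.args)

/-- `CT ⊨ a` for an atom `a` (validity of its universal closure). -/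
def Valid (fc : CABA F P D) (a : Atom F P) : Prop := ∀ σ : ℕ → D, fc.Holds σ a

/-- A set `C` of constraints is consistent: `CT ⊨ ∃(⋀C)`. -/
def ConsistentSet (fc : CABA F P D) (C : Set (Atom F P)) : Prop :=
  ∃ σ : ℕ → D, ∀ c ∈ C, fc.Holds σ c

/-- `CT ⊨ t = u` (for ground terms this is independent of the assignment). -/
def termEq (fc : CABA F P D) (t u : Term F) : Prop :=
  ∀ σ : ℕ → D, Term.evalT fc.funI σ t = Term.evalT fc.funI σ u

/-- `CT ⊨ p(t) ↔ p(t')`, i.e. same predicate and `CT ⊨ t = t'` componentwise. -/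
def atomEq (fc : CABA F P D) (a b : Atom F P) : Prop :=
  a.pred = b.pred ∧ List.Forall₂ fc.termEq a.args b.args

/-- `CT ⊨ ⋀A ↔ ⋀A'` for sets of ground atoms: each atom of each set is `CT`-equivalent
to an atom of the other set. -/
def asmSetEq (fc : CABA F P D) (A B : Set (Atom F P)) : Prop :=
  (∀ a ∈ A, ∃ b ∈ B, fc.atomEq a b) ∧ (∀ b ∈ B, ∃ a ∈ A, fc.atomEq a b)

end CABA

/-- `TightFor fc C A R s` holds iff there is a tight constrained argument (a finite tree)
for claim `s`, supported exactly by the constraints `C`, assumptions `A` and rules `R`: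
every non-leaf node `p(t)` has as children the instantiated body atoms of exactly one
renamed-apart (normalised) rule of `R` with head `p(X)` and `ϑ = {X/t}`, and every leaf
is a constraint in `C`, an assumption in `A`, or `true`. -/
inductive TightFor {F P D : Type} (fc : CABA F P D) :
    Set (Atom F P) → Set (Atom F P) → Set (Rule F P) → Atom F P → Prop
  | asm {a : Atom F P} (ha : a ∈ fc.Asm) : TightFor fc ∅ {a} ∅ a
  | node {p : P} {ts : List (Term F)} {r rv : Rule F P} {xs : List ℕ}
      {CS AS : ℕ → Set (Atom F P)} {RS : ℕ → Set (Rule F P)}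
      (hr : r ∈ fc.Rules)
      (hvar : ∃ ρ : ℕ → Term F, IsRenaming ρ ∧ rv = r.subst ρ)
      (hhead : rv.head = ⟨p, xs.map Term.var⟩)
      (hnodup : xs.Nodup)
      (hlen : xs.length = ts.length)
      (hfresh : (Rule.vars rv \ {n | n ∈ xs}) ∩ Term.varsL ts = ∅)
      (hcon : ∀ i (hi : i < rv.body.length),
        (rv.body.get ⟨i, hi⟩).subst (mkSubst xs ts) ∈ fc.Con →
          CS i = {(rv.body.get ⟨i, hi⟩).subst (mkSubst xs ts)} ∧ AS i = ∅ ∧ RS i = ∅)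
      (hasm : ∀ i (hi : i < rv.body.length),
        (rv.body.get ⟨i, hi⟩).subst (mkSubst xs ts) ∉ fc.Con →
        (rv.body.get ⟨i, hi⟩).subst (mkSubst xs ts) ∈ fc.Asm →
          CS i = ∅ ∧ AS i = {(rv.body.get ⟨i, hi⟩).subst (mkSubst xs ts)} ∧ RS i = ∅)
      (hder : ∀ i (hi : i < rv.body.length),
        (rv.body.get ⟨i, hi⟩).subst (mkSubst xs ts) ∉ fc.Con →
        (rv.body.get ⟨i, hi⟩).subst (mkSubst xs ts) ∉ fc.Asm →
          TightFor fc (CS i) (AS i) (RS i) ((rv.body.get ⟨i, hi⟩).subst (mkSubst xs ts)))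
      (hsep : ∀ i j (hi : i < rv.body.length) (hj : j < rv.body.length), i ≠ j →
        (setVars (CS i ∪ AS i) ∩ setVars (CS j ∪ AS j)) ⊆
          Atom.vars ((rv.body.get ⟨i, hi⟩).subst (mkSubst xs ts)) ∩
            Atom.vars ((rv.body.get ⟨j, hj⟩).subst (mkSubst xs ts)))
      (hsep' : ∀ i (hi : i < rv.body.length),
        setVars (CS i ∪ AS i) ∩ (Term.varsL ts ∪ Rule.vars rv) ⊆
          Atom.vars ((rv.body.get ⟨i, hi⟩).subst (mkSubst xs ts))) :
      TightFor fc (⋃ i ∈ Finset.range rv.body.length, CS i)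
        (⋃ i ∈ Finset.range rv.body.length, AS i)
        ({r} ∪ ⋃ i ∈ Finset.range rv.body.length, RS i)
        ⟨p, ts⟩

/-- A constrained argument `C ∪ A ⊢_R s`, represented by its support and claim. -/
structure CArgument (F P : Type) : Type where
  con : Set (Atom F P)
  asm : Set (Atom F P)
  rules : Set (Rule F P)
  claim : Atom F P

namespace CArgument
variable {F P : Type}
def vars (α : CArgument F P) : Set ℕ := setVars α.con ∪ setVars α.asm ∪ α.claim.vars
def Ground (α : CArgument F P) : Prop := α.vars = ∅
def subst (σ : ℕ → Term F) (α : CArgument F P) : CArgument F P :=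
  ⟨substSet σ α.con, substSet σ α.asm, α.rules, α.claim.subst σ⟩
end CArgument

section Args

variable {F P D : Type}

/-- A tight constrained argument (with consistent constraint set). -/
def IsTightArg (fc : CABA F P D) (α : CArgument F P) : Prop :=
  TightFor fc α.con α.asm α.rules α.claim ∧ fc.ConsistentSet α.con

/-- The set `TCArg` of all tight constrained arguments. -/
def TCArg (fc : CABA F P D) : Set (CArgument F P) := {α | IsTightArg fc α}

/-- Most general: the claim is of the form `p(X)` for a tuple of distinct variables. -/
def IsMostGeneral (α : CArgument F P) : Prop :=
  ∃ xs : List ℕ, xs.Nodup ∧ α.claim.args = xs.map Term.var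

/-- The set `MGCArg` of all most general constrained arguments. -/
def MGCArg (fc : CABA F P D) : Set (CArgument F P) := {α | IsTightArg fc α ∧ IsMostGeneral α}

/-- `α'` is a constrained instance (via `ϑ` and `D`) of `α`. -/
def ConstrainedInstanceOf (fc : CABA F P D) (α' α : CArgument F P) : Prop :=
  ∃ (ϑ : ℕ → Term F) (Dc : Set (Atom F P)), Dc ⊆ fc.Con ∧
    α'.con = substSet ϑ α.con ∪ Dc ∧ α'.asm = substSet ϑ α.asm ∧
    α'.rules = α.rules ∧ α'.claim = α.claim.subst ϑ ∧ fc.ConsistentSet α'.con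

/-- The set `CArg` of all constrained arguments. -/
def CArg (fc : CABA F P D) : Set (CArgument F P) :=
  {α | ∃ β ∈ TCArg fc, ConstrainedInstanceOf fc α β}

/-- `GrCInst α`: the ground constrained instances of `α`. -/
def GrCInst (fc : CABA F P D) (α : CArgument F P) : Set (CArgument F P) :=
  {α' | ConstrainedInstanceOf fc α' α ∧ α'.Ground}

/-- `GrCInst Γ` for a set `Γ` of constrained arguments. -/
def GrCInstSet (fc : CABA F P D) (Γ : Set (CArgument F P)) : Set (CArgument F P) :=
  ⋃ α ∈ Γ, GrCInst fc α

/-- Equality of ground constrained arguments modulo ground constraints. -/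
def EqModGC (fc : CABA F P D) (α β : CArgument F P) : Prop :=
  fc.asmSetEq α.asm β.asm ∧ fc.atomEq α.claim β.claim

/-- Equality of sets of ground constrained arguments modulo ground constraints. -/
def SetEqModGC (fc : CABA F P D) (S T : Set (CArgument F P)) : Prop :=
  (∀ x ∈ S, ∃ y ∈ T, EqModGC fc x y) ∧ (∀ y ∈ T, ∃ x ∈ S, EqModGC fc x y)

/-- The equivalence relation `≡` on sets of constrained arguments: the smallest
equivalence relation identifying ground arguments equal modulo ground constraints,
identifying `{α}` with `GrCInst α`, and a congruence for union. -/
inductive AEquiv (fc : CABA F P D) : Set (CArgument F P) → Set (CArgument F P) → Prop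
  | refl (Γ : Set (CArgument F P)) : AEquiv fc Γ Γ
  | symm {Γ Δ : Set (CArgument F P)} : AEquiv fc Γ Δ → AEquiv fc Δ Γ
  | trans {Γ Δ Θ : Set (CArgument F P)} : AEquiv fc Γ Δ → AEquiv fc Δ Θ → AEquiv fc Γ Θ
  | groundEq {α β : CArgument F P} (hα : α ∈ CArg fc) (hβ : β ∈ CArg fc)
      (gα : α.Ground) (gβ : β.Ground) (h : EqModGC fc α β) : AEquiv fc {α} {β}
  | grInst {α : CArgument F P} (hα : α ∈ CArg fc) : AEquiv fc {α} (GrCInst fc α)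
  | unionCongr (Γ : Set (CArgument F P)) {Δ₁ Δ₂ : Set (CArgument F P)} :
      AEquiv fc Δ₁ Δ₂ → AEquiv fc (Γ ∪ Δ₁) (Γ ∪ Δ₂)

/-- `α` fully attacks `β` (Definition of full attack, including the case where the
claim of `α` and the attacked assumption of `β` have different argument tuples,
handled via fresh linking variables). -/
def FullAttacks (fc : CABA F P D) (α β : CArgument F P) : Prop :=
  ∃ a ∈ β.asm, α.claim.pred = fc.contrPred a.pred ∧
    ((α.claim.args = a.args ∧
        ∀ σ : ℕ → D, (∀ d ∈ β.con, fc.Holds σ d) →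
          ∃ σ' : ℕ → D, Agree σ' σ α.claim.vars ∧ ∀ c ∈ α.con, fc.Holds σ' c) ∨
      (α.claim.args ≠ a.args ∧
        ∀ σ : ℕ → D, (∀ d ∈ β.con, fc.Holds σ d) →
          ∃ σ' : ℕ → D,
            List.Forall₂ (fun t u => Term.evalT fc.funI σ' t = Term.evalT fc.funI σ u)
              α.claim.args a.args ∧
            ∀ c ∈ α.con, fc.Holds σ' c))

/-- `α` partially attacks `β`. -/
def PartialAttacks (fc : CABA F P D) (α β : CArgument F P) : Prop :=
  ∃ a ∈ β.asm, α.claim.pred = fc.contrPred a.pred ∧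
    ((α.claim.args = a.args ∧
        ∃ σ₁ σ₂ : ℕ → D, Agree σ₁ σ₂ α.claim.vars ∧
          (∀ c ∈ α.con, fc.Holds σ₁ c) ∧ ∀ d ∈ β.con, fc.Holds σ₂ d) ∨
      (α.claim.args ≠ a.args ∧
        ∃ σ₁ σ₂ : ℕ → D,
          List.Forall₂ (fun t u => Term.evalT fc.funI σ₁ t = Term.evalT fc.funI σ₂ u)
            α.claim.args a.args ∧
          (∀ c ∈ α.con, fc.Holds σ₁ c) ∧ ∀ d ∈ β.con, fc.Holds σ₂ d))

/-- Attack between ground constrained arguments, viewed as arguments of `Ground(F_c)`. -/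
def GAttacks (fc : CABA F P D) (α β : CArgument F P) : Prop :=
  ∃ a ∈ β.asm, α.claim = fc.contrary a

/-- `Γ ⊆ CArg` is a conflict-free extension of `F_c`:
`GrCInst(Γ)` is conflict-free in `Ground(F_c)`. -/
def ConflictFreeExt (fc : CABA F P D) (Γ : Set (CArgument F P)) : Prop :=
  ∀ α ∈ GrCInstSet fc Γ, ∀ β ∈ GrCInstSet fc Γ, ¬ GAttacks fc α β

/-- `Γ ⊆ CArg` is an admissible extension of `F_c`. -/
def AdmissibleExt (fc : CABA F P D) (Γ : Set (CArgument F P)) : Prop :=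
  ConflictFreeExt fc Γ ∧
    ∀ α ∈ GrCInstSet fc Γ, ∀ β ∈ GrCInstSet fc (CArg fc),
      GAttacks fc β α → ∃ γ ∈ GrCInstSet fc Γ, GAttacks fc γ β

/-- `Γ ⊆ CArg` is a stable extension of `F_c`. -/
def StableExt (fc : CABA F P D) (Γ : Set (CArgument F P)) : Prop :=
  ConflictFreeExt fc Γ ∧
    ∀ β ∈ GrCInstSet fc (CArg fc), β ∉ GrCInstSet fc Γ →
      ∃ α ∈ GrCInstSet fc Γ, GAttacks fc α β

/-- Non-ground conflict-freeness. -/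
def NGCF (fc : CABA F P D) (S : Set (CArgument F P)) : Prop :=
  ¬ ∃ α ∈ S, ∃ β ∈ S, PartialAttacks fc α β

/-- The set of constrained arguments fully attacked by some member of `S`. -/
def FAtt (fc : CABA F P D) (S : Set (CArgument F P)) : Set (CArgument F P) :=
  {β | β ∈ CArg fc ∧ ∃ α ∈ S, FullAttacks fc α β}

/-- A set of constrained arguments is non-overlapping: partial and full attacks coincide. -/
def NonOverlapping (fc : CABA F P D) (Δ : Set (CArgument F P)) : Prop :=
  ∀ α ∈ Δ, ∀ β ∈ Δ, (PartialAttacks fc α β ↔ FullAttacks fc α β)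

/-- Two constrained arguments have common constrained instances. -/
def CommonCI (fc : CABA F P D) (α β : CArgument F P) : Prop :=
  ∃ α' ∈ GrCInst fc α, ∃ β' ∈ GrCInst fc β, EqModGC fc α' β'

/-- A set of constrained arguments is instance-disjoint. -/
def InstanceDisjoint (fc : CABA F P D) (Δ : Set (CArgument F P)) : Prop :=
  ∀ α ∈ Δ, ∀ β ∈ Δ, α ≠ β → ¬ CommonCI fc α β

/-- The set of equality constraints `{X = t}` linking variables `xs` to terms `ts`. -/
def eqAtoms (fc : CABA F P D) (xs : List ℕ) (ts : List (Term F)) : Set (Atom F P) :=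
  {a | ∃ pr ∈ (xs.map Term.var).zip ts, a = Atom.mk fc.eqP [pr.1, pr.2]}

end Args

/-- A rule of a generic (ground) language. -/
structure GRule (S : Type) : Type where
  head : S
  body : List S

/-- A 4-tuple `⟨L, ℛ, 𝒜, ⎯⟩` as candidate ABA framework. -/
structure ABAF (S : Type) : Type where
  lang : Set S
  rules : Set (GRule S)
  asm : Set S
  contrary : S → S

/-- The 4-tuple is an ABA framework: rules are over the language, the assumptions are a
non-empty subset of the language, and the contrary map is total from assumptions into
the language. -/
def ABAF.IsABA {S : Type} (fr : ABAF S) : Prop :=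
  (∀ r ∈ fr.rules, r.head ∈ fr.lang ∧ ∀ b ∈ r.body, b ∈ fr.lang) ∧
    fr.asm ⊆ fr.lang ∧ fr.asm.Nonempty ∧ ∀ a ∈ fr.asm, fr.contrary a ∈ fr.lang

def Rule.toGRule {F P : Type} (r : Rule F P) : GRule (Atom F P) := ⟨r.head, r.body⟩

/-- The grounding `Ground(F_c)` of a CABA framework. -/
def groundABA {F P D : Type} (fc : CABA F P D) : ABAF (Atom F P) where
  lang := {a | a ∈ fc.Lc ∧ a.Ground}
  rules := {gr | (∃ r ∈ fc.Rules, ∃ ϑ : ℕ → Term F, gr = (r.subst ϑ).toGRule ∧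
        (r.subst ϑ).head.Ground ∧ ∀ b ∈ (r.subst ϑ).body, b.Ground) ∨
      (∃ c, c ∈ fc.Con ∧ c.Ground ∧ fc.Valid c ∧ gr = ⟨c, []⟩)}
  asm := {a | a ∈ fc.Asm ∧ a.Ground}
  contrary := fc.contrary

/-- An argument `A ⊢_R s` in a (flat) ABA framework: a finite tree with root the claim,
whose non-leaf nodes have as children the body of exactly one rule of `R` with matching
head, and whose leaves are assumptions in `A` or `true`. -/
inductive ABADeriv {S : Type} (fr : ABAF S) : Set S → Set (GRule S) → S → Prop
  | asm {a : S} (ha : a ∈ fr.asm) : ABADeriv fr {a} ∅ a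
  | node {r : GRule S} {AS : ℕ → Set S} {RS : ℕ → Set (GRule S)}
      (hr : r ∈ fr.rules)
      (hasm : ∀ i (hi : i < r.body.length), r.body.get ⟨i, hi⟩ ∈ fr.asm →
        AS i = {r.body.get ⟨i, hi⟩} ∧ RS i = ∅)
      (hder : ∀ i (hi : i < r.body.length), r.body.get ⟨i, hi⟩ ∉ fr.asm →
        ABADeriv fr (AS i) (RS i) (r.body.get ⟨i, hi⟩)) :
      ABADeriv fr (⋃ i ∈ Finset.range r.body.length, AS i)
        ({r} ∪ ⋃ i ∈ Finset.range r.body.length, RS i) r.head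

section Split

variable {F P D : Type}

/-- Two sets of constraints are mutually exclusive: `CT ⊨ ¬∃(e₁ ∧ e₂)`. -/
def MutuallyExclusive (fc : CABA F P D) (E₁ E₂ : Set (Atom F P)) : Prop :=
  ¬ ∃ σ : ℕ → D, (∀ e ∈ E₁, fc.Holds σ e) ∧ ∀ e ∈ E₂, fc.Holds σ e

/-- `Es` is a constraint split `cs(C,D)` of the sets `C` and `D` of constraints. -/
def IsConstraintSplit (fc : CABA F P D) (C Dc : Set (Atom F P))
    (Es : List (Set (Atom F P))) : Prop :=
  (∀ E ∈ Es, E ⊆ fc.Con ∧ E.Finite) ∧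
  (∀ σ : ℕ → D,
    ((¬ ∃ σ' : ℕ → D, Agree σ' σ (setVars C ∩ setVars Dc) ∧ ∀ c ∈ C, fc.Holds σ' c) ∧
        ∀ d ∈ Dc, fc.Holds σ d) ↔
      ∃ E ∈ Es, ∀ e ∈ E, fc.Holds σ e) ∧
  (∀ E ∈ Es, fc.ConsistentSet E) ∧
  Es.Pairwise (MutuallyExclusive fc)

/-- `CT` is closed under negation. -/
def ClosedUnderNeg (fc : CABA F P D) : Prop :=
  ∀ c ∈ fc.Con, ∃ ds : List (Atom F P), (∀ d ∈ ds, d ∈ fc.Con) ∧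
    (∀ σ : ℕ → D, (¬ fc.Holds σ c) ↔ ∃ d ∈ ds, fc.Holds σ d) ∧
    ds.Pairwise (fun d₁ d₂ => ¬ ∃ σ : ℕ → D, fc.Holds σ d₁ ∧ fc.Holds σ d₂)

/-- `CT` is closed under existential quantification. -/
def ClosedUnderEx (fc : CABA F P D) : Prop :=
  ∀ C : Set (Atom F P), C ⊆ fc.Con → C.Finite → ∀ V : Set ℕ,
    ∃ Es : List (Set (Atom F P)), (∀ E ∈ Es, E ⊆ fc.Con ∧ E.Finite) ∧
      ∀ σ : ℕ → D, (∃ σ' : ℕ → D, Agree σ' σ V ∧ ∀ c ∈ C, fc.Holds σ' c) ↔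
        ∃ E ∈ Es, ∀ e ∈ E, fc.Holds σ e

/-- `Bs` is an output of the splitting operation `split_ci(α,β)`. -/
def IsSplitCI (fc : CABA F P D) (α β : CArgument F P) (Bs : List (CArgument F P)) : Prop :=
  ∃ (C A : Set (Atom F P)) (R R' : Set (Rule F P)) (s : Atom F P)
      (Dc : Set (Atom F P)) (Es : List (Set (Atom F P))),
    C.Finite ∧ Dc.Finite ∧ C ⊆ fc.Con ∧ Dc ⊆ fc.Con ∧
    AEquiv fc {α} {CArgument.mk C A R s} ∧ AEquiv fc {β} {CArgument.mk Dc A R' s} ∧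
    setVars C ∩ setVars Dc ⊆ setVars A ∪ s.vars ∧
    fc.ConsistentSet (C ∪ Dc) ∧
    IsConstraintSplit fc C Dc Es ∧
    Bs = Es.map fun E => CArgument.mk E A R' s

/-- `Bs` is an output of the splitting operation `split_pa(α,β)`. -/
def IsSplitPA (fc : CABA F P D) (α β : CArgument F P) (Bs : List (CArgument F P)) : Prop :=
  ∃ (C A₁ A₂ : Set (Atom F P)) (R₁ R₂ : Set (Rule F P)) (s₁ s₂ a : Atom F P)
      (Dc : Set (Atom F P)) (Es : List (Set (Atom F P))),
    C.Finite ∧ Dc.Finite ∧ C ⊆ fc.Con ∧ Dc ⊆ fc.Con ∧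
    AEquiv fc {α} {CArgument.mk C A₁ R₁ s₁} ∧ AEquiv fc {β} {CArgument.mk Dc A₂ R₂ s₂} ∧
    a ∈ A₂ ∧ s₁ = fc.contrary a ∧
    setVars C ∩ setVars Dc ⊆ s₁.vars ∧
    fc.ConsistentSet (C ∪ Dc) ∧
    IsConstraintSplit fc C Dc Es ∧
    Bs = CArgument.mk (C ∪ Dc) A₂ R₂ s₂ :: (Es.map fun E => CArgument.mk E A₂ R₂ s₂)

/-- One step of the Argument Splitting procedure. -/
inductive SplitStep (fc : CABA F P D) :
    Set (CArgument F P) → Set (CArgument F P) → Prop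
  | ci {Δ : Set (CArgument F P)} {α β : CArgument F P} {Bs : List (CArgument F P)}
      (hα : α ∈ Δ) (hβ : β ∈ Δ) (h : CommonCI fc α β) (hs : IsSplitCI fc α β Bs) :
      SplitStep fc Δ ((Δ \ {β}) ∪ {b | b ∈ Bs})
  | pa {Δ : Set (CArgument F P)} {α β : CArgument F P} {Bs : List (CArgument F P)}
      (hα : α ∈ Δ) (hβ : β ∈ Δ) (hp : PartialAttacks fc α β) (hf : ¬ FullAttacks fc α β)
      (hs : IsSplitPA fc α β Bs) :
      SplitStep fc Δ ((Δ \ {β}) ∪ {b | b ∈ Bs})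

end Split

end CABAFormal

/-!
Every constrained argument is a constrained instance of a tight one, and constrained instances
compose, so it suffices that every tight argument with claim `p(t)` is a constrained instance of
a tight argument with claim `p(X)`. This goes by induction on the tree, for any `s` with
`p(t) = sθ`: a node expanded with a variant of the rule `r` is re-expanded at `s` with a variant
of `r` renamed apart from the variables of `s`. Its children then generalise the old ones, the
subtrees below them lift by induction, and since their fresh variables are chosen pairwise
disjoint, the substitutions mapping the lifted subtrees back onto the old ones glue into one.
-/

namespace CABAFormal

variable {F P D : Type}

namespace Term

theorem substL_eq_map (σ : ℕ → Term F) : ∀ l : List (Term F), substL σ l = l.map (substT σ)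
  | [] => rfl
  | t :: ts => by rw [substL, substL_eq_map σ ts, List.map_cons]

theorem varsL_eq_biUnion : ∀ l : List (Term F), varsL l = ⋃ t ∈ l, varsT t
  | [] => by simp [varsL]
  | t :: ts => by simp [varsL, varsL_eq_biUnion ts]

theorem varsT_subset_varsL {t : Term F} {l : List (Term F)} (h : t ∈ l) :
    varsT t ⊆ varsL l := by
  rw [varsL_eq_biUnion]
  exact Set.subset_biUnion_of_mem h

mutual
theorem substT_var : ∀ t : Term F, substT Term.var t = t
  | .var _ => rfl
  | .app f args => by rw [substT, substL_var args]
theorem substL_var : ∀ l : List (Term F), substL Term.var l = l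
  | [] => rfl
  | t :: ts => by rw [substL, substT_var t, substL_var ts]
end

mutual
theorem substT_substT (σ₁ σ₂ : ℕ → Term F) :
    ∀ t : Term F, substT σ₂ (substT σ₁ t) = substT (fun n => substT σ₂ (σ₁ n)) t
  | .var _ => rfl
  | .app f args => by rw [substT, substT, substT, substL_substL σ₁ σ₂ args]
theorem substL_substL (σ₁ σ₂ : ℕ → Term F) :
    ∀ l : List (Term F), substL σ₂ (substL σ₁ l) = substL (fun n => substT σ₂ (σ₁ n)) l
  | [] => rfl
  | t :: ts => by rw [substL, substL, substL, substT_substT σ₁ σ₂ t, substL_substL σ₁ σ₂ ts]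
end

mutual
theorem substT_congr {σ σ' : ℕ → Term F} :
    ∀ t : Term F, (∀ v ∈ varsT t, σ v = σ' v) → substT σ t = substT σ' t
  | .var n, h => h n rfl
  | .app f args, h => by rw [substT, substT, substL_congr args (by simpa [varsT] using h)]
theorem substL_congr {σ σ' : ℕ → Term F} :
    ∀ l : List (Term F), (∀ v ∈ varsL l, σ v = σ' v) → substL σ l = substL σ' l
  | [], _ => rfl
  | t :: ts, h => by
      rw [substL, substL, substT_congr t (fun v hv => h v (Or.inl hv)),
        substL_congr ts (fun v hv => h v (Or.inr hv))]
end

mutual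
theorem varsT_finite : ∀ t : Term F, (varsT t).Finite
  | .var n => Set.finite_singleton n
  | .app _ args => varsL_finite args
theorem varsL_finite : ∀ l : List (Term F), (varsL l).Finite
  | [] => Set.finite_empty
  | t :: ts => (varsT_finite t).union (varsL_finite ts)
end

mutual
theorem varsT_substT_subset (σ : ℕ → Term F) :
    ∀ t : Term F, varsT (substT σ t) ⊆ ⋃ v ∈ varsT t, varsT (σ v)
  | .var n => by simp [substT, varsT]
  | .app _ args => by simpa [substT, varsT] using varsL_substL_subset σ args
theorem varsL_substL_subset (σ : ℕ → Term F) :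
    ∀ l : List (Term F), varsL (substL σ l) ⊆ ⋃ v ∈ varsL l, varsT (σ v)
  | [] => by simp [substL, varsL]
  | t :: ts => by
      rw [substL, varsL, varsL, Set.biUnion_union]
      exact Set.union_subset_union (varsT_substT_subset σ t) (varsL_substL_subset σ ts)
end

mutual
theorem evalT_substT (funI : F → List D → D) (σ : ℕ → D) (θ : ℕ → Term F) :
    ∀ t : Term F, evalT funI σ (substT θ t) = evalT funI (fun n => evalT funI σ (θ n)) t
  | .var _ => rfl
  | .app f args => by rw [substT, evalT, evalT, evalL_substL funI σ θ args]
theorem evalL_substL (funI : F → List D → D) (σ : ℕ → D) (θ : ℕ → Term F) :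
    ∀ l : List (Term F), evalL funI σ (substL θ l) = evalL funI (fun n => evalT funI σ (θ n)) l
  | [] => rfl
  | t :: ts => by rw [substL, evalL, evalL, evalT_substT funI σ θ t, evalL_substL funI σ θ ts]
end

theorem substL_map_var (σ : ℕ → Term F) (xs : List ℕ) :
    substL σ (xs.map Term.var) = xs.map σ := by
  rw [substL_eq_map, List.map_map]
  rfl

theorem var_injective : Function.Injective (Term.var : ℕ → Term F) := fun _ _ h => by
  cases h
  rfl

end Term

namespace Atom

@[simp] theorem subst_var (a : Atom F P) : a.subst Term.var = a := by
  simp [subst, Term.substL_var]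

theorem subst_subst (σ₁ σ₂ : ℕ → Term F) (a : Atom F P) :
    (a.subst σ₁).subst σ₂ = a.subst (fun n => Term.substT σ₂ (σ₁ n)) := by
  simp [subst, Term.substL_substL]

theorem subst_congr {σ σ' : ℕ → Term F} (a : Atom F P)
    (h : ∀ v ∈ a.vars, σ v = σ' v) : a.subst σ = a.subst σ' := by
  simp only [subst, mk.injEq, true_and]
  exact Term.substL_congr a.args h

theorem vars_finite (a : Atom F P) : a.vars.Finite := Term.varsL_finite a.args

theorem vars_subst_subset (σ : ℕ → Term F) (a : Atom F P) :
    (a.subst σ).vars ⊆ ⋃ v ∈ a.vars, Term.varsT (σ v) :=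
  Term.varsL_substL_subset σ a.args

theorem vars_rename_subset (π : ℕ → ℕ) (a : Atom F P) :
    (a.subst fun n => Term.var (π n)).vars ⊆ π '' a.vars := by
  refine (vars_subst_subset _ a).trans ?_
  intro v hv
  simp only [Set.mem_iUnion, Term.varsT, Set.mem_singleton_iff] at hv
  obtain ⟨w, hw, rfl⟩ := hv
  exact ⟨w, hw, rfl⟩

end Atom

theorem PredClosed.subst_mem_iff {L : Set (Atom F P)} (hL : PredClosed L) {a : Atom F P}
    (σ : ℕ → Term F) : a.subst σ ∈ L ↔ a ∈ L := by
  have hlen : (Term.substL σ a.args).length = a.args.length := by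
    simp [Term.substL_eq_map]
  exact ⟨fun h => hL a.pred _ a.args h hlen.symm, fun h => hL a.pred a.args _ h hlen⟩

theorem Rule.vars_finite (r : Rule F P) : r.vars.Finite :=
  (Atom.vars_finite _).union <| r.body.finite_toSet.biUnion fun b _ => Atom.vars_finite b

theorem Rule.vars_subset_of_mem_body {r : Rule F P} {b : Atom F P} (hb : b ∈ r.body) :
    b.vars ⊆ r.vars := fun _ hv => Or.inr (Set.mem_biUnion hb hv)

theorem Rule.vars_rename_subset (π : ℕ → ℕ) (r : Rule F P) :
    (r.subst fun n => Term.var (π n)).vars ⊆ π '' r.vars := by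
  refine Set.union_subset ((Atom.vars_rename_subset π _).trans
    (Set.image_mono Set.subset_union_left)) ?_
  simp only [Rule.subst, List.mem_map, Set.iUnion_subset_iff, forall_exists_index, and_imp]
  rintro _ b hb rfl
  exact (Atom.vars_rename_subset π b).trans (Set.image_mono (vars_subset_of_mem_body hb))

theorem Rule.vars_getD_body_subset (r : Rule F P) (d : Atom F P) {i : ℕ}
    (hi : i < r.body.length) : (r.body.getD i d).vars ⊆ r.vars := by
  rw [List.getD_eq_getElem _ _ hi]
  exact vars_subset_of_mem_body (List.getElem_mem hi)

theorem Rule.get_body_subst (σ : ℕ → Term F) (r : Rule F P) (d : Atom F P) {i : ℕ}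
    (hi : i < (r.subst σ).body.length) :
    (r.subst σ).body.get ⟨i, hi⟩ = (r.body.getD i d).subst σ := by
  simp only [Rule.subst, List.length_map] at hi
  simp [Rule.subst, List.getElem?_eq_getElem hi]

@[simp] theorem Rule.length_body_subst (σ : ℕ → Term F) (r : Rule F P) :
    (r.subst σ).body.length = r.body.length := List.length_map _

@[simp] theorem substSet_var (S : Set (Atom F P)) : substSet Term.var S = S := by
  simp [substSet]

theorem substSet_substSet (σ₁ σ₂ : ℕ → Term F) (S : Set (Atom F P)) :
    substSet σ₂ (substSet σ₁ S) = substSet (fun n => Term.substT σ₂ (σ₁ n)) S := by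
  simp only [substSet, Set.image_image, Atom.subst_subst]

theorem substSet_union (σ : ℕ → Term F) (S T : Set (Atom F P)) :
    substSet σ (S ∪ T) = substSet σ S ∪ substSet σ T := Set.image_union _ _ _

@[simp] theorem substSet_empty (σ : ℕ → Term F) : substSet σ (∅ : Set (Atom F P)) = ∅ :=
  Set.image_empty _

@[simp] theorem substSet_singleton (σ : ℕ → Term F) (a : Atom F P) :
    substSet σ {a} = {a.subst σ} := Set.image_singleton

theorem setVars_union (S T : Set (Atom F P)) :
    setVars (S ∪ T) = setVars S ∪ setVars T := Set.biUnion_union _ _ _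

@[simp] theorem setVars_singleton (a : Atom F P) : setVars {a} = a.vars := by simp [setVars]

theorem setVars_iUnion {ι : Sort*} (S : ι → Set (Atom F P)) :
    setVars (⋃ i, S i) = ⋃ i, setVars (S i) :=
  Set.biUnion_iUnion _ _

theorem setVars_mono {S T : Set (Atom F P)} (h : S ⊆ T) : setVars S ⊆ setVars T :=
  Set.biUnion_subset_biUnion_left h

theorem vars_subset_setVars {a : Atom F P} {S : Set (Atom F P)} (h : a ∈ S) :
    a.vars ⊆ setVars S := Set.subset_biUnion_of_mem h

theorem substSet_congr {σ σ' : ℕ → Term F} {S : Set (Atom F P)}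
    (h : ∀ v ∈ setVars S, σ v = σ' v) : substSet σ S = substSet σ' S :=
  Set.image_congr fun a ha => Atom.subst_congr a fun v hv => h v (vars_subset_setVars ha hv)

theorem CABA.ConsistentSet.of_substSet {fc : CABA F P D} {θ : ℕ → Term F}
    {C : Set (Atom F P)} (h : fc.ConsistentSet (substSet θ C)) : fc.ConsistentSet C := by
  obtain ⟨σ, hσ⟩ := h
  refine ⟨fun n => Term.evalT fc.funI σ (θ n), fun c hc => ?_⟩
  simpa [CABA.Holds, Atom.subst, Term.evalL_substL] using hσ (c.subst θ) ⟨c, hc, rfl⟩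

theorem lookup_zip_map_left {β : Type*} {f : ℕ → ℕ} (hf : Function.Injective f) (n : ℕ) :
    ∀ (xs : List ℕ) (ts : List β), ((xs.map f).zip ts).lookup (f n) = (xs.zip ts).lookup n
  | [], _ | _ :: _, [] => rfl
  | x :: xs, t :: ts => by
    have hbeq : (f n == f x) = (n == x) := by simp [hf.eq_iff]
    simp only [List.map_cons, List.zip_cons_cons, List.lookup_cons, hbeq,
      lookup_zip_map_left hf n xs ts]

theorem lookup_zip_map_right {β γ : Type*} (g : β → γ) (n : ℕ) :
    ∀ (xs : List ℕ) (ts : List β),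
      (xs.zip (ts.map g)).lookup n = ((xs.zip ts).lookup n).map g
  | [], _ | _ :: _, [] => rfl
  | x :: xs, t :: ts => by
    simp only [List.map_cons, List.zip_cons_cons, List.lookup_cons]
    split <;> simp [lookup_zip_map_right g n xs ts]

theorem mem_of_lookup_zip_eq_some {β : Type*} {n : ℕ} {t : β} :
    ∀ {xs : List ℕ} {ts : List β}, (xs.zip ts).lookup n = some t → t ∈ ts
  | [], _, h | _ :: _, [], h => by simp at h
  | x :: xs, u :: ts, h => by
    simp only [List.zip_cons_cons, List.lookup_cons] at h
    split at h
    · simp_all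
    · exact List.mem_cons_of_mem u (mem_of_lookup_zip_eq_some h)

theorem varsT_mkSubst_subset (xs : List ℕ) (ts : List (Term F)) (v : ℕ) :
    Term.varsT (mkSubst xs ts v) ⊆ Term.varsL ts ∪ {v} := by
  unfold mkSubst
  cases h : (xs.zip ts).lookup v with
  | none => simp [Term.varsT]
  | some t =>
    rw [Option.getD_some]
    exact (Term.varsT_subset_varsL (mem_of_lookup_zip_eq_some h)).trans Set.subset_union_left

theorem mkSubst_map_apply {f : ℕ → ℕ} (hf : Function.Injective f) (xs : List ℕ)
    (ts : List (Term F)) (n : ℕ) :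
    mkSubst (xs.map f) ts (f n) = ((xs.zip ts).lookup n).getD (Term.var (f n)) := by
  rw [mkSubst, lookup_zip_map_left hf]

theorem Atom.vars_subst_mkSubst_subset (xs : List ℕ) (ts : List (Term F)) (a : Atom F P) :
    (a.subst (mkSubst xs ts)).vars ⊆ Term.varsL ts ∪ a.vars := by
  refine (vars_subst_subset _ a).trans (Set.iUnion₂_subset fun v hv => ?_)
  exact (varsT_mkSubst_subset xs ts v).trans (Set.union_subset_union_right _ (by simpa using hv))

theorem map_mkSubst_self : ∀ {xs : List ℕ} {ts : List (Term F)},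
    xs.Nodup → xs.length = ts.length → xs.map (mkSubst xs ts) = ts
  | [], [], _, _ => rfl
  | x :: xs, t :: ts, hnd, hlen => by
    rw [List.nodup_cons] at hnd
    have hrest : xs.map (mkSubst (x :: xs) (t :: ts)) = xs.map (mkSubst xs ts) :=
      List.map_congr_left fun y hy => by
        simp [mkSubst, List.lookup_cons, show (y == x) = false from
          beq_false_of_ne (fun h => hnd.1 (h ▸ hy))]
    simp [hrest, map_mkSubst_self hnd.2 (Nat.succ_injective hlen), mkSubst]

theorem exists_perm_fresh {S V : Set ℕ} (hS : S.Finite) (hV : V.Finite) :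
    ∃ π : Equiv.Perm ℕ, {n | π n ≠ n}.Finite ∧ ∀ x ∈ S, π x ∉ V := by
  obtain ⟨N, hN⟩ := (hS.union hV).bddAbove
  -- swap the blocks `[0, N]` and `[N + 1, 2N + 1]`
  let f : ℕ → ℕ := fun x => if x ≤ N then x + (N + 1) else if x ≤ 2 * N + 1 then x - (N + 1) else x
  have hf : Function.Involutive f := fun x => by simp only [f]; split_ifs <;> omega
  refine ⟨hf.toPerm, (Set.finite_Iic (2 * N + 1)).subset fun x hx => ?_, fun x hx hxV => ?_⟩
  · simp only [Set.mem_ofPred_eq, Function.Involutive.coe_toPerm, f] at hx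
    simp only [Set.mem_Iic]
    split_ifs at hx <;> omega
  · have hxN : x ≤ N := hN (Or.inl hx)
    have := hN (Or.inr hxV)
    simp only [Function.Involutive.coe_toPerm, f, if_pos hxN] at this
    omega

theorem exists_disjoint_family {X : Type*} [Nonempty X] (W : X → Set ℕ) (Q : ℕ → X → Prop)
    {B : Set ℕ} (hB : B.Finite) : ∀ {m : ℕ},
    (∀ i < m, ∀ V : Set ℕ, V.Finite → ∃ x, (W x).Finite ∧ Disjoint (W x) V ∧ Q i x) →
    ∃ g : ℕ → X, (∀ i < m, (W (g i)).Finite ∧ Disjoint (W (g i)) B ∧ Q i (g i)) ∧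
      ∀ i < m, ∀ j < m, i ≠ j → Disjoint (W (g i)) (W (g j))
  | 0, _ => ⟨fun _ => Classical.arbitrary X, by simp, by simp⟩
  | m + 1, h => by
    obtain ⟨g, hg, hdisj⟩ := exists_disjoint_family W Q hB (m := m) fun i hi => h i (by omega)
    have hused : (B ∪ ⋃ i ∈ Finset.range m, W (g i)).Finite :=
      hB.union <| (Finset.range m).finite_toSet.biUnion fun i hi => (hg i (by simpa using hi)).1
    obtain ⟨x, hxfin, hxdisj, hxQ⟩ := h m (by omega) _ hused
    rw [Set.disjoint_union_right, Set.disjoint_iUnion₂_right] at hxdisj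
    have hx : ∀ j < m, Disjoint (W x) (W (g j)) := fun j hj => hxdisj.2 j (by simpa using hj)
    refine ⟨Function.update g m x, fun i hi => ?_, fun i hi j hj hij => ?_⟩
    · rcases Nat.lt_succ_iff_lt_or_eq.mp hi with hi | rfl
      · rw [Function.update_of_ne hi.ne]
        exact hg i hi
      · rw [Function.update_self]
        exact ⟨hxfin, hxdisj.1, hxQ⟩
    · rcases Nat.lt_succ_iff_lt_or_eq.mp hi with hi | rfl <;>
        rcases Nat.lt_succ_iff_lt_or_eq.mp hj with hj | rfl
      · rw [Function.update_of_ne hi.ne, Function.update_of_ne hj.ne]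
        exact hdisj i hi j hj hij
      · rw [Function.update_of_ne hi.ne, Function.update_self]
        exact (hx i hi).symm
      · rw [Function.update_of_ne hj.ne, Function.update_self]
        exact hx j hj
      · exact absurd rfl hij

theorem exists_glue {α β : Type*} {m : ℕ} (W : ℕ → Set α) (f : ℕ → α → β) (τ : α → β)
    (hf : ∀ i < m, ∀ u ∉ W i, f i u = τ u) :
    ∃ ϑ : α → β, (∀ i < m, ∀ u, (∀ j < m, j ≠ i → u ∉ W j) → ϑ u = f i u) ∧
      ∀ u, (∀ i < m, u ∉ W i) → ϑ u = τ u := by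
  classical
  refine ⟨fun u => if h : ∃ i < m, u ∈ W i then f h.choose u else τ u, fun i hi u hu => ?_,
    fun u hu => dif_neg fun ⟨i, hi, hui⟩ => hu i hi hui⟩
  by_cases h : ∃ i < m, u ∈ W i
  · obtain ⟨hkm, hk⟩ := h.choose_spec
    have hki : h.choose = i := by_contra fun hne => hu _ hkm hne hk
    simp only [dif_pos h, hki]
  · simp only [dif_neg h]
    exact (hf i hi u fun hui => h ⟨i, hi, hui⟩).symm

/-- For `r` with head `p(xs₀)`: the `i`-th child of the node `p(ts)` expanded with the variant of
`r` renamed by `π`. -/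
def Rule.renamedChild (r : Rule F P) (π : ℕ → ℕ) (xs₀ : List ℕ) (ts : List (Term F)) (i : ℕ) :
    Atom F P :=
  ((r.body.getD i r.head).subst fun n => Term.var (π n)).subst (mkSubst (xs₀.map π) ts)

theorem Rule.get_body_rename_subst (r : Rule F P) (π : ℕ → ℕ) (xs₀ : List ℕ)
    (ts : List (Term F)) {i : ℕ} (hi : i < (r.subst fun n => Term.var (π n)).body.length) :
    ((r.subst fun n => Term.var (π n)).body.get ⟨i, hi⟩).subst (mkSubst (xs₀.map π) ts) =
      r.renamedChild π xs₀ ts i := by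
  rw [get_body_subst _ r r.head]
  rfl

theorem Rule.vars_renamedChild_subset (r : Rule F P) (π : ℕ → ℕ) (xs₀ : List ℕ)
    (ts : List (Term F)) {i : ℕ} (hi : i < r.body.length) :
    (r.renamedChild π xs₀ ts i).vars ⊆ Term.varsL ts ∪ π '' r.vars :=
  (Atom.vars_subst_mkSubst_subset _ _ _).trans <| Set.union_subset_union_right _ <|
    (Atom.vars_rename_subset π _).trans (Set.image_mono (r.vars_getD_body_subset _ hi))

theorem Rule.head_rename_eq {r : Rule F P} {p : P} {xs₀ xs : List ℕ} (π : ℕ → ℕ)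
    (hargs : r.head.args = xs₀.map Term.var)
    (hhead : (r.subst fun n => Term.var (π n)).head = ⟨p, xs.map Term.var⟩) :
    r.head = ⟨p, xs₀.map Term.var⟩ ∧ xs = xs₀.map π := by
  simp only [Rule.subst, Atom.subst, hargs, Term.substL_map_var, Atom.mk.injEq] at hhead
  refine ⟨by rw [← hhead.1, ← hargs], List.map_injective_iff.2 (Term.var_injective (F := F)) ?_⟩
  rw [← hhead.2, List.map_map]
  rfl

/-- The witness `τ` sends `π' x` to `π x` for every variable `x` of `r` and agrees with `θ`
elsewhere; the head variables of the two variants are replaced by `θ ts` and `ts` respectively. -/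
theorem Rule.exists_renamedChild_eq_subst (r : Rule F P) (π π' : Equiv.Perm ℕ) (xs₀ : List ℕ)
    (ts : List (Term F)) (θ : ℕ → Term F) (hπ' : ∀ x ∈ r.vars, π' x ∉ Term.varsL ts) :
    ∃ τ : ℕ → Term F, (∀ u ∉ π' '' r.vars, τ u = θ u) ∧ ∀ i < r.body.length,
      r.renamedChild π xs₀ (Term.substL θ ts) i = (r.renamedChild π' xs₀ ts i).subst τ := by
  classical
  refine ⟨fun u => if π'.symm u ∈ r.vars then Term.var (π (π'.symm u)) else θ u,
    fun u hu => if_neg fun h => hu ⟨_, h, π'.apply_symm_apply u⟩, fun i hi => ?_⟩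
  simp only [renamedChild, Atom.subst_subst]
  refine Atom.subst_congr _ fun n hn => ?_
  have hnr : n ∈ r.vars := r.vars_getD_body_subset _ hi hn
  simp only [Term.substT, mkSubst_map_apply π.injective, mkSubst_map_apply π'.injective,
    Term.substL_eq_map, lookup_zip_map_right]
  cases h : (xs₀.zip ts).lookup n with
  | none => simp [Term.substT, hnr]
  | some t =>
    refine Term.substT_congr t fun v hv => (if_neg fun hv' => hπ' _ hv' ?_).symm
    simpa using Term.varsT_subset_varsL (mem_of_lookup_zip_eq_some h) hv

structure Generalization (F P : Type) where
  con : Set (Atom F P)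
  asm : Set (Atom F P)
  inst : ℕ → Term F
  fresh : Set ℕ

instance : Nonempty (Generalization F P) := ⟨⟨∅, ∅, Term.var, ∅⟩⟩

/-- `g` lifts the support `C, A` of an argument for `s.subst θ` to one for `s`: the lifted
support uses only variables of `s` and the fresh variables, and `g.inst`, which agrees with `θ`
off the fresh variables, maps it back onto `C, A`. -/
structure Generalization.Generalizes (g : Generalization F P) (C A : Set (Atom F P))
    (s : Atom F P) (θ : ℕ → Term F) : Prop where
  fresh_finite : g.fresh.Finite
  vars_subset : setVars (g.con ∪ g.asm) ⊆ s.vars ∪ g.fresh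
  inst_eq : ∀ v ∉ g.fresh, g.inst v = θ v
  con_eq : C = substSet g.inst g.con
  asm_eq : A = substSet g.inst g.asm

theorem Generalization.generalizes_of_subst {C A C' A' : Set (Atom F P)} {s : Atom F P}
    {θ : ℕ → Term F} (hC : C = substSet θ C') (hA : A = substSet θ A')
    (hvars : setVars (C' ∪ A') ⊆ s.vars) :
    (Generalization.mk C' A' θ ∅).Generalizes C A s θ :=
  ⟨Set.finite_empty, by simpa using hvars, fun _ _ => rfl, hC, hA⟩

theorem Generalization.exists_generalizes_biUnion {m : ℕ} {CS AS : ℕ → Set (Atom F P)}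
    {c : ℕ → Atom F P} {s : Atom F P} {θ τ : ℕ → Term F} {g : ℕ → Generalization F P}
    (hg : ∀ i < m, (g i).Generalizes (CS i) (AS i) (c i) τ) {W₀ : Set ℕ} (hW₀ : W₀.Finite)
    (hτ : ∀ u ∉ W₀, τ u = θ u) (hc : ∀ i < m, (c i).vars ⊆ s.vars ∪ W₀)
    (hsep : ∀ i < m, ∀ j < m, Disjoint (g i).fresh (c j).vars)
    (hdisj : ∀ i < m, ∀ j < m, i ≠ j → Disjoint (g i).fresh (g j).fresh) :
    ∃ ϑ : ℕ → Term F, (Generalization.mk (⋃ i ∈ Finset.range m, (g i).con)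
      (⋃ i ∈ Finset.range m, (g i).asm) ϑ (W₀ ∪ ⋃ i ∈ Finset.range m, (g i).fresh)).Generalizes
        (⋃ i ∈ Finset.range m, CS i) (⋃ i ∈ Finset.range m, AS i) s θ := by
  obtain ⟨ϑ, hϑg, hϑτ⟩ := exists_glue (fun i => (g i).fresh) (fun i => (g i).inst) τ
    fun i hi => (hg i hi).inst_eq
  have hϑ : ∀ i < m, ∀ S ⊆ (g i).con ∪ (g i).asm, substSet (g i).inst S = substSet ϑ S :=
    fun i hi S hS => substSet_congr fun v hv => by
      refine (hϑg i hi v fun j hj hji hvj => ?_).symm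
      rcases (hg i hi).vars_subset (setVars_mono hS hv) with hvc | hvg
      · exact Set.disjoint_left.1 (hsep j hj i hi) hvj hvc
      · exact Set.disjoint_left.1 (hdisj i hi j hj hji.symm) hvg hvj
  refine ⟨ϑ, hW₀.union ((Finset.range m).finite_toSet.biUnion
      fun i hi => (hg i (Finset.mem_range.1 hi)).fresh_finite), ?_, fun v hv => ?_, ?_, ?_⟩
  · have hvars : ∀ i < m, setVars ((g i).con ∪ (g i).asm) ⊆
        s.vars ∪ (W₀ ∪ ⋃ i ∈ Finset.range m, (g i).fresh) := fun i hi =>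
      (hg i hi).vars_subset.trans <| Set.union_subset
        ((hc i hi).trans (Set.union_subset_union_right _ Set.subset_union_left))
        (Set.subset_union_of_subset_right (Set.subset_union_of_subset_right
          (Set.subset_iUnion₂ (s := fun i _ => (g i).fresh) i (Finset.mem_range.2 hi)) _) _)
    dsimp only
    rw [setVars_union]
    simp only [setVars_iUnion]
    exact Set.union_subset
      (Set.iUnion₂_subset fun i hi =>
        (setVars_mono Set.subset_union_left).trans (hvars i (Finset.mem_range.1 hi)))
      (Set.iUnion₂_subset fun i hi =>
        (setVars_mono Set.subset_union_right).trans (hvars i (Finset.mem_range.1 hi)))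
  · simp only [Set.mem_union, Set.mem_iUnion, not_or, not_exists] at hv
    show ϑ v = θ v
    rw [hϑτ v fun i hi hvi => hv.2 i (Finset.mem_range.2 hi) hvi, hτ v hv.1]
  · simp only [substSet, Set.image_iUnion₂]
    refine Set.iUnion₂_congr fun i hi => ?_
    rw [(hg i (Finset.mem_range.1 hi)).con_eq]
    exact hϑ i (Finset.mem_range.1 hi) _ Set.subset_union_left
  · simp only [substSet, Set.image_iUnion₂]
    refine Set.iUnion₂_congr fun i hi => ?_
    rw [(hg i (Finset.mem_range.1 hi)).asm_eq]
    exact hϑ i (Finset.mem_range.1 hi) _ Set.subset_union_right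

/-- The conditions `TightFor.node` puts on the support `C, A, R` below a child `c`, with `T` in
place of `TightFor fc` for a child that is neither a constraint nor an assumption. -/
def ChildSupport (fc : CABA F P D)
    (T : Set (Atom F P) → Set (Atom F P) → Set (Rule F P) → Atom F P → Prop)
    (C A : Set (Atom F P)) (R : Set (Rule F P)) (c : Atom F P) : Prop :=
  (c ∈ fc.Con → C = {c} ∧ A = ∅ ∧ R = ∅) ∧
  (c ∉ fc.Con → c ∈ fc.Asm → C = ∅ ∧ A = {c} ∧ R = ∅) ∧
  (c ∉ fc.Con → c ∉ fc.Asm → T C A R c)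

/-- `V` holds the variables a lift has to avoid: sibling subtrees are lifted one after another,
each avoiding the fresh variables of the previous ones. -/
def Liftable (fc : CABA F P D) (C A : Set (Atom F P)) (R : Set (Rule F P)) (o : Atom F P) :
    Prop :=
  ∀ (s : Atom F P) (θ : ℕ → Term F) (V : Set ℕ), V.Finite → s.vars ⊆ V → o = s.subst θ →
    ∃ g : Generalization F P, g.Generalizes C A s θ ∧ Disjoint g.fresh V ∧
      TightFor fc g.con g.asm R s

theorem liftable_asm (fc : CABA F P D) {a : Atom F P} (ha : a ∈ fc.Asm) :
    Liftable fc ∅ {a} ∅ a := by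
  rintro s θ V - - rfl
  exact ⟨⟨∅, {s}, θ, ∅⟩, Generalization.generalizes_of_subst (by simp) (by simp) (by simp),
    Set.empty_disjoint V, .asm ((fc.asm_closed.subst_mem_iff θ).1 ha)⟩

theorem ChildSupport.exists_generalizes {fc : CABA F P D} {C A : Set (Atom F P)}
    {R : Set (Rule F P)} {c : Atom F P} {τ : ℕ → Term F}
    (h : ChildSupport fc (Liftable fc) C A R (c.subst τ)) {V : Set ℕ} (hV : V.Finite)
    (hcV : c.vars ⊆ V) :
    ∃ g : Generalization F P, g.Generalizes C A c τ ∧ Disjoint g.fresh V ∧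
      ChildSupport fc (TightFor fc) g.con g.asm R c := by
  obtain ⟨hcon, hasm, hder⟩ := h
  have hfresh : Disjoint (∅ : Set ℕ) V := Set.empty_disjoint V
  by_cases hC : c ∈ fc.Con
  · obtain ⟨rfl, rfl, rfl⟩ := hcon ((fc.con_closed.subst_mem_iff τ).2 hC)
    exact ⟨⟨{c}, ∅, τ, ∅⟩, Generalization.generalizes_of_subst (by simp) (by simp) (by simp),
      hfresh, fun _ => ⟨rfl, rfl, rfl⟩, fun h => absurd hC h, fun h => absurd hC h⟩
  have hC' : c.subst τ ∉ fc.Con := (fc.con_closed.subst_mem_iff τ).not.2 hC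
  by_cases hA : c ∈ fc.Asm
  · obtain ⟨rfl, rfl, rfl⟩ := hasm hC' ((fc.asm_closed.subst_mem_iff τ).2 hA)
    exact ⟨⟨∅, {c}, τ, ∅⟩, Generalization.generalizes_of_subst (by simp) (by simp) (by simp),
      hfresh, fun h => absurd h hC, fun _ _ => ⟨rfl, rfl, rfl⟩, fun _ h => absurd hA h⟩
  obtain ⟨g, hg, hgV, htight⟩ :=
    hder hC' ((fc.asm_closed.subst_mem_iff τ).not.2 hA) c τ V hV hcV rfl
  exact ⟨g, hg, hgV, fun h => absurd h hC, fun _ h => absurd h hA, fun _ _ => htight⟩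

theorem tightFor_node_of_renaming (fc : CABA F P D) {r : Rule F P} (hr : r ∈ fc.Rules)
    {π : Equiv.Perm ℕ} (hπ : {n | π n ≠ n}.Finite) {p : P} {xs₀ : List ℕ}
    (hhead : r.head = ⟨p, xs₀.map Term.var⟩) (hnd : xs₀.Nodup) {ts : List (Term F)}
    (hlen : xs₀.length = ts.length) (hπts : ∀ x ∈ r.vars, π x ∉ Term.varsL ts)
    {CS AS : ℕ → Set (Atom F P)} {RS : ℕ → Set (Rule F P)} {W : ℕ → Set ℕ}
    (hchild : ∀ i < r.body.length,
      ChildSupport fc (TightFor fc) (CS i) (AS i) (RS i) (r.renamedChild π xs₀ ts i))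
    (hvars : ∀ i < r.body.length,
      setVars (CS i ∪ AS i) ⊆ (r.renamedChild π xs₀ ts i).vars ∪ W i)
    (hW : ∀ i < r.body.length, Disjoint (W i) (Term.varsL ts ∪ π '' r.vars))
    (hWW : ∀ i < r.body.length, ∀ j < r.body.length, i ≠ j → Disjoint (W i) (W j)) :
    TightFor fc (⋃ i ∈ Finset.range r.body.length, CS i)
      (⋃ i ∈ Finset.range r.body.length, AS i)
      ({r} ∪ ⋃ i ∈ Finset.range r.body.length, RS i) ⟨p, ts⟩ := by
  have hlt {i : ℕ} (hi : i < (r.subst fun n => Term.var (π n)).body.length) :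
      i < r.body.length := by simpa using hi
  have hbase {i : ℕ} (hi : i < r.body.length) :=
    r.vars_renamedChild_subset π xs₀ ts hi
  have hrv : (r.subst fun n => Term.var (π n)).vars ⊆ π '' r.vars := r.vars_rename_subset π
  rw [← Rule.length_body_subst (fun n => Term.var (π n)) r]
  refine .node hr ⟨_, ⟨π, hπ, rfl⟩, rfl⟩ ?_ (hnd.map π.injective) (by simpa using hlen) ?_
    (fun i hi => ?_) (fun i hi => ?_) (fun i hi => ?_) (fun i j hi hj hij => ?_) (fun i hi => ?_)
  · simp [Rule.subst, Atom.subst, hhead, Term.substL_map_var]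
  · refine Set.eq_empty_of_forall_notMem fun v ⟨⟨hv, _⟩, hvts⟩ => ?_
    obtain ⟨x, hx, rfl⟩ := hrv hv
    exact hπts x hx hvts
  all_goals simp only [Rule.get_body_rename_subst]
  · exact (hchild i (hlt hi)).1
  · exact (hchild i (hlt hi)).2.1
  · exact (hchild i (hlt hi)).2.2
  · rintro v ⟨hvi, hvj⟩
    rcases hvars i (hlt hi) hvi with hci | hWi <;> rcases hvars j (hlt hj) hvj with hcj | hWj
    · exact ⟨hci, hcj⟩
    · exact absurd (hbase (hlt hi) hci) (Set.disjoint_left.1 (hW j (hlt hj)) hWj)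
    · exact absurd (hbase (hlt hj) hcj) (Set.disjoint_left.1 (hW i (hlt hi)) hWi)
    · exact absurd hWj (Set.disjoint_left.1 (hWW i (hlt hi) j (hlt hj) hij) hWi)
  · rintro v ⟨hvi, hv⟩
    refine (hvars i (hlt hi) hvi).resolve_right fun hWi => ?_
    exact Set.disjoint_left.1 (hW i (hlt hi)) hWi (hv.imp_right fun h => hrv h)

theorem liftable_node (fc : CABA F P D) {p : P} {ts : List (Term F)} {r rv : Rule F P}
    {xs : List ℕ} {CS AS : ℕ → Set (Atom F P)} {RS : ℕ → Set (Rule F P)} (hr : r ∈ fc.Rules)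
    (hvar : ∃ ρ : ℕ → Term F, IsRenaming ρ ∧ rv = r.subst ρ)
    (hhead : rv.head = ⟨p, xs.map Term.var⟩) (hlen : xs.length = ts.length)
    (hchild : ∀ i (hi : i < rv.body.length), ChildSupport fc (Liftable fc) (CS i) (AS i) (RS i)
      ((rv.body.get ⟨i, hi⟩).subst (mkSubst xs ts))) :
    Liftable fc (⋃ i ∈ Finset.range rv.body.length, CS i)
      (⋃ i ∈ Finset.range rv.body.length, AS i)
      ({r} ∪ ⋃ i ∈ Finset.range rv.body.length, RS i) ⟨p, ts⟩ := by
  rintro ⟨p', sargs⟩ θ V hV hsV heq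
  obtain ⟨rfl, rfl⟩ : p = p' ∧ ts = Term.substL θ sargs := by simpa [Atom.subst] using heq
  obtain ⟨_, ⟨π, -, rfl⟩, rfl⟩ := hvar
  obtain ⟨xs₀, hnd, hargs⟩ := fc.rules_norm r hr
  obtain ⟨hrhead, rfl⟩ := Rule.head_rename_eq π hargs hhead
  obtain ⟨π', hπ'fin, hπ'V⟩ := exists_perm_fresh r.vars_finite hV
  have hsV : Term.varsL sargs ⊆ V := hsV
  have hπ'sargs : ∀ x ∈ r.vars, π' x ∉ Term.varsL sargs := fun x hx h => hπ'V x hx (hsV h)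
  obtain ⟨τ, hτθ, hτ⟩ := r.exists_renamedChild_eq_subst π π' xs₀ sargs θ hπ'sargs
  set c := r.renamedChild π' xs₀ sargs
  have hcvars : ∀ i < r.body.length, (c i).vars ⊆ Term.varsL sargs ∪ π' '' r.vars :=
    fun i hi => r.vars_renamedChild_subset π' xs₀ sargs hi
  have hBfin : (V ∪ π' '' r.vars).Finite := hV.union (r.vars_finite.image π')
  have hcB : ∀ i < r.body.length, (c i).vars ⊆ V ∪ π' '' r.vars :=
    fun i hi => (hcvars i hi).trans (Set.union_subset_union_left _ hsV)
  have hlift : ∀ i < r.body.length, ∀ V' : Set ℕ, V'.Finite → ∃ g : Generalization F P,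
      g.fresh.Finite ∧ Disjoint g.fresh V' ∧ (g.Generalizes (CS i) (AS i) (c i) τ ∧
        ChildSupport fc (TightFor fc) g.con g.asm (RS i) (c i)) := by
    intro i hi V' hV'
    have hchild := hchild i (by simpa using hi)
    rw [Rule.get_body_rename_subst, hτ i hi] at hchild
    obtain ⟨g, hg, hgV, hgc⟩ := hchild.exists_generalizes (hV'.union hBfin)
      ((hcB i hi).trans Set.subset_union_right)
    exact ⟨g, hg.fresh_finite, hgV.mono_right Set.subset_union_left, hg, hgc⟩
  obtain ⟨g, hg, hdisj⟩ := exists_disjoint_family Generalization.fresh _ hBfin hlift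
  have hgB i (hi : i < r.body.length) := (hg i hi).2.1
  have hgen i (hi : i < r.body.length) := (hg i hi).2.2.1
  obtain ⟨ϑ, hϑ⟩ := Generalization.exists_generalizes_biUnion (s := ⟨p, sargs⟩) hgen
    (r.vars_finite.image π') hτθ hcvars (fun i hi j hj => (hgB i hi).mono_right (hcB j hj)) hdisj
  simp only [Rule.length_body_subst]
  refine ⟨_, hϑ, Set.disjoint_union_left.2 ⟨?_, ?_⟩, tightFor_node_of_renaming fc hr hπ'fin
    hrhead hnd (by simpa [Term.substL_eq_map] using hlen) hπ'sargs (fun i hi => (hg i hi).2.2.2)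
    (fun i hi => (hgen i hi).vars_subset)
    (fun i hi => (hgB i hi).mono_right (Set.union_subset_union_left _ hsV)) hdisj⟩
  · exact Set.disjoint_left.2 fun _ ⟨x, hx, hxv⟩ => hxv ▸ hπ'V x hx
  · exact Set.disjoint_iUnion₂_left.2 fun i hi =>
      (hgB i (Finset.mem_range.1 hi)).mono_right Set.subset_union_left

theorem TightFor.liftable {fc : CABA F P D} {C A : Set (Atom F P)} {R : Set (Rule F P)}
    {o : Atom F P} (h : TightFor fc C A R o) : Liftable fc C A R o := by
  induction h with
  | asm ha => exact liftable_asm fc ha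
  | node hr hvar hhead _ hlen _ hcon hasm _ _ _ ih =>
    exact liftable_node fc hr hvar hhead hlen fun i hi => ⟨hcon i hi, hasm i hi, ih i hi⟩

theorem ConstrainedInstanceOf.refl {fc : CABA F P D} {α : CArgument F P}
    (h : fc.ConsistentSet α.con) : ConstrainedInstanceOf fc α α :=
  ⟨Term.var, ∅, Set.empty_subset _, by simp, by simp, rfl, by simp, h⟩

theorem ConstrainedInstanceOf.trans {fc : CABA F P D} {γ β α : CArgument F P}
    (h₁ : ConstrainedInstanceOf fc γ β) (h₂ : ConstrainedInstanceOf fc β α) :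
    ConstrainedInstanceOf fc γ α := by
  obtain ⟨ϑ₁, D₁, hD₁, hc₁, ha₁, hr₁, hcl₁, hcons⟩ := h₁
  obtain ⟨ϑ₂, D₂, hD₂, hc₂, ha₂, hr₂, hcl₂, -⟩ := h₂
  refine ⟨fun n => Term.substT ϑ₁ (ϑ₂ n), substSet ϑ₁ D₂ ∪ D₁,
    Set.union_subset ?_ hD₁, ?_, ?_, hr₁.trans hr₂, ?_, hcons⟩
  · rintro _ ⟨d, hd, rfl⟩
    exact (fc.con_closed.subst_mem_iff ϑ₁).2 (hD₂ hd)
  · rw [hc₁, hc₂, substSet_union, substSet_substSet, Set.union_assoc]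
  · rw [ha₁, ha₂, substSet_substSet]
  · rw [hcl₁, hcl₂, Atom.subst_subst]

theorem grCInst_subset_of_constrainedInstanceOf {fc : CABA F P D} {β α : CArgument F P}
    (h : ConstrainedInstanceOf fc β α) : GrCInst fc β ⊆ GrCInst fc α :=
  fun _ ⟨hγ, hground⟩ => ⟨hγ.trans h, hground⟩

theorem MGCArg_subset_CArg (fc : CABA F P D) : MGCArg fc ⊆ CArg fc :=
  fun μ hμ => ⟨μ, hμ.1, .refl hμ.1.2⟩

theorem exists_MGCArg_constrainedInstanceOf {fc : CABA F P D} {β : CArgument F P}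
    (hβ : β ∈ TCArg fc) : ∃ μ ∈ MGCArg fc, ConstrainedInstanceOf fc β μ := by
  obtain ⟨htight, hcons⟩ := hβ
  set zs := List.range β.claim.args.length
  set s : Atom F P := ⟨β.claim.pred, zs.map Term.var⟩
  have hclaim : β.claim = s.subst (mkSubst zs β.claim.args) := by
    simp [s, Atom.subst, Term.substL_map_var, zs,
      map_mkSubst_self List.nodup_range (List.length_range (n := β.claim.args.length))]
  obtain ⟨g, hg, hgs, hgtight⟩ := htight.liftable s _ s.vars s.vars_finite subset_rfl hclaim
  refine ⟨⟨g.con, g.asm, β.rules, s⟩, ⟨⟨hgtight, (hg.con_eq ▸ hcons).of_substSet⟩,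
    zs, List.nodup_range, rfl⟩, g.inst, ∅, Set.empty_subset _, by simp [hg.con_eq], hg.asm_eq,
    rfl, hclaim.trans (s.subst_congr fun v hv => ?_), hcons⟩
  exact (hg.inst_eq v (Set.disjoint_right.1 hgs hv)).symm

end CABAFormal

open CABAFormal in
/-- The set of all ground constrained arguments `GrCInst(CArg)` equals
`GrCInst(MGCArg)`, the ground constrained instances of the most general
constrained arguments. -/
theorem groundCArg_eq_grCInst_MGCArg {F P D : Type} (fc : CABA F P D) :
    GrCInstSet fc (CArg fc) = GrCInstSet fc (MGCArg fc) := by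
  refine subset_antisymm (Set.iUnion₂_subset fun α hα => ?_)
    (Set.biUnion_subset_biUnion_left (MGCArg_subset_CArg fc))
  obtain ⟨β, hβ, hαβ⟩ := hα
  obtain ⟨μ, hμ, hβμ⟩ := exists_MGCArg_constrainedInstanceOf hβ
  exact (grCInst_subset_of_constrainedInstanceOf (hαβ.trans hβμ)).trans
    (Set.subset_biUnion_of_mem hμ)
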